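/- arXiv:1907.09113 — 2 statements merged into one kernel-verified Lean document; each statement's English description precedes it below -/
import Mathlib

section
/- Let V be a set of values with |V| ≥ 3. The only unanimous preference aggregation rule over V that corresponds to some graph aggregation rule is a dictatorship: if F is unanimous and some graph aggregation rule corresponds to F, then F is dictatorial. -/
/-- An audience is a strict linear order on values: irreflexive, transitive and
complete (any two distinct values are comparable). -/
def IsAudience {V : Type} (P : V → V → Prop) : Prop :=
  (∀ v, ¬ P v v) ∧ (∀ u v w, P u v → P v w → P u w) ∧ (∀ v w, v ≠ w → P v w ∨ P w v)

/-- Given a VAF with attack relation `att` and value labelling `val`, and an audience `P`,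
argument `a` defeats `b` iff `a` attacks `b` and `val b` is not preferred to `val a`.
`defeats att val P` is the defeat graph induced by `P`. -/
def defeats {A V : Type} (att : A → A → Prop) (val : A → V) (P : V → V → Prop) :
    A → A → Prop :=
  fun a b => att a b ∧ ¬ P (val b) (val a)

/-!
Correspondence with a graph aggregation rule forces independence of irrelevant alternatives:
in the framework with the single attack `w → v` (arguments are the values themselves), the attack
survives as a defeat exactly when the audience does not prefer `v` to `w`. So the aggregate
verdict on `v` versus `w` is determined by the individual defeat graphs, hence by the individual
verdicts on that pair. Arrow's theorem then gives a dictator; we follow Geanakoplos' pivotal-voter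
proof. A value that every voter ranks first or last is ranked first or last by society. Moving
the voters one at a time from ranking `b` last to ranking it first, society's ranking of `b`
flips at some pivotal voter, who then dictates every pair avoiding `b`; with three values the
pivots for different values coincide.
-/

section Audience

variable {V : Type} {P Q : V → V → Prop} {u v w b : V}

theorem IsAudience.irrefl (hP : IsAudience P) (v : V) : ¬ P v v := hP.1 v

theorem IsAudience.trans (hP : IsAudience P) (huv : P u v) (hvw : P v w) : P u w :=
  hP.2.1 u v w huv hvw

theorem IsAudience.asymm (hP : IsAudience P) (huv : P u v) : ¬ P v u :=
  fun hvu => hP.irrefl u (hP.trans huv hvu)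

theorem IsAudience.not_iff (hP : IsAudience P) (huv : u ≠ v) : ¬ P u v ↔ P v u :=
  ⟨(hP.2.2 u v huv).resolve_left, hP.asymm⟩

theorem IsAudience.total (hP : IsAudience P) (huv : u ≠ v) : P u v ∨ P v u := hP.2.2 u v huv

theorem IsAudience.eq_of_imp (hP : IsAudience P) (hQ : IsAudience Q)
    (h : ∀ u v, P u v → Q u v) : Q = P := by
  funext u v
  refine propext ⟨fun hQuv => ?_, h u v⟩
  have huv : u ≠ v := by rintro rfl; exact hQ.irrefl u hQuv
  by_contra hPuv
  exact hQ.asymm hQuv (h v u ((hP.not_iff huv).mp hPuv))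

theorem isAudience_wellOrderingRel : IsAudience (WellOrderingRel (α := V)) :=
  ⟨irrefl_of _, fun _ _ _ => trans_of _, fun u v huv =>
    (trichotomous_of WellOrderingRel u v).imp_right (Or.resolve_left · huv)⟩

def RanksFirst (P : V → V → Prop) (b : V) : Prop := ∀ v, v ≠ b → P b v

def RanksLast (P : V → V → Prop) (b : V) : Prop := ∀ v, v ≠ b → P v b

def raiseToTop (b : V) (P : V → V → Prop) : V → V → Prop :=
  fun u v => (u = b ∧ v ≠ b) ∨ (u ≠ b ∧ v ≠ b ∧ P u v)

def lowerToBottom (b : V) (P : V → V → Prop) : V → V → Prop :=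
  fun u v => (u ≠ b ∧ v = b) ∨ (u ≠ b ∧ v ≠ b ∧ P u v)

theorem IsAudience.raiseToTop (hP : IsAudience P) (b : V) : IsAudience (raiseToTop b P) := by
  obtain ⟨hirr, htrans, htot⟩ := hP
  unfold _root_.raiseToTop
  refine ⟨?_, ?_, ?_⟩ <;> grind

theorem IsAudience.lowerToBottom (hP : IsAudience P) (b : V) :
    IsAudience (lowerToBottom b P) := by
  obtain ⟨hirr, htrans, htot⟩ := hP
  unfold _root_.lowerToBottom
  refine ⟨?_, ?_, ?_⟩ <;> grind

@[simp] theorem raiseToTop_self_left : raiseToTop b P b v ↔ v ≠ b := by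
  simp [raiseToTop]

@[simp] theorem not_raiseToTop_self_right : ¬ raiseToTop b P u b := by
  simp [raiseToTop]

theorem raiseToTop_iff (hu : u ≠ b) (hv : v ≠ b) : raiseToTop b P u v ↔ P u v := by
  simp [raiseToTop, hu, hv]

@[simp] theorem lowerToBottom_self_right : lowerToBottom b P u b ↔ u ≠ b := by
  simp [lowerToBottom]

@[simp] theorem not_lowerToBottom_self_left : ¬ lowerToBottom b P b v := by
  simp [lowerToBottom]

theorem lowerToBottom_iff (hu : u ≠ b) (hv : v ≠ b) : lowerToBottom b P u v ↔ P u v := by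
  simp [lowerToBottom, hu, hv]

theorem ranksFirst_raiseToTop : RanksFirst (raiseToTop b P) b := fun _ => raiseToTop_self_left.mpr

theorem ranksLast_lowerToBottom : RanksLast (lowerToBottom b P) b :=
  fun _ => lowerToBottom_self_right.mpr

theorem IsAudience.not_ranksLast_of_ranksFirst (hP : IsAudience P) (hvb : v ≠ b)
    (hfirst : RanksFirst P b) : ¬ RanksLast P b :=
  fun hlast => hP.asymm (hfirst v hvb) (hlast v hvb)

end Audience

theorem exists_ne_ne {V : Type} {v₁ v₂ v₃ : V} (h₁₂ : v₁ ≠ v₂) (h₁₃ : v₁ ≠ v₃) (h₂₃ : v₂ ≠ v₃)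
    (b c : V) : ∃ a, a ≠ b ∧ a ≠ c := by
  rcases eq_or_ne v₁ b with rfl | h₁b
  · rcases eq_or_ne v₂ c with rfl | h₂c
    · exact ⟨v₃, h₁₃.symm, h₂₃.symm⟩
    · exact ⟨v₂, h₁₂.symm, h₂c⟩
  · rcases eq_or_ne v₁ c with rfl | h₁c
    · rcases eq_or_ne v₂ b with rfl | h₂b
      · exact ⟨v₃, h₂₃.symm, h₁₃.symm⟩
      · exact ⟨v₂, h₂b, h₁₂.symm⟩
    · exact ⟨v₁, h₁b, h₁c⟩

section Profile

variable {V : Type} {n : ℕ}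

def IsProfile (P : Fin n → V → V → Prop) : Prop := ∀ i, IsAudience (P i)

variable (n) in
def extremeProfile (b : V) (k : ℕ) : Fin n → V → V → Prop :=
  fun j => if (j : ℕ) < k then raiseToTop b WellOrderingRel else lowerToBottom b WellOrderingRel

theorem isProfile_extremeProfile (b : V) (k : ℕ) : IsProfile (extremeProfile n b k) := by
  intro j
  unfold extremeProfile
  split_ifs
  exacts [isAudience_wellOrderingRel.raiseToTop b, isAudience_wellOrderingRel.lowerToBottom b]

variable {b : V} {k : ℕ} {j : Fin n}

theorem ranksFirst_extremeProfile (h : (j : ℕ) < k) : RanksFirst (extremeProfile n b k j) b := by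
  simpa [extremeProfile, h] using ranksFirst_raiseToTop

theorem ranksLast_extremeProfile (h : k ≤ j) : RanksLast (extremeProfile n b k j) b := by
  simpa [extremeProfile, h.not_gt] using ranksLast_lowerToBottom

theorem extremeProfile_succ_of_ne (h : (j : ℕ) ≠ k) :
    extremeProfile n b (k + 1) j = extremeProfile n b k j := by
  have : (j : ℕ) < k + 1 ↔ (j : ℕ) < k := by omega
  simp only [extremeProfile, this]

theorem exists_profile_splice {P : Fin n → V → V → Prop} (hP : IsProfile P) {x y : V}
    (hx : x ≠ b) (hy : y ≠ b) {i : Fin n} (hi : P i x y) :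
    ∃ Q : Fin n → V → V → Prop, IsProfile Q ∧ (∀ j, Q j x y ↔ P j x y) ∧
      (∀ j, Q j x b ↔ extremeProfile n b i j x b) ∧
      (∀ j, Q j b y ↔ extremeProfile n b (i + 1) j b y) := by
  classical
  have hxy : x ≠ y := by rintro rfl; exact (hP i).irrefl x hi
  -- Voters before `i` put `b` on top and voters after `i` put it at the bottom, keeping their
  -- `P`-order elsewhere, while voter `i` ranks `x` above `b` above `y`.
  refine ⟨fun j => if j < i then raiseToTop b (P j)
    else if j = i then raiseToTop x (lowerToBottom y WellOrderingRel)
    else lowerToBottom b (P j), fun j => ?_, fun j => ?_, fun j => ?_, fun j => ?_⟩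
  · dsimp only
    split_ifs
    exacts [(hP j).raiseToTop b,
      (isAudience_wellOrderingRel.lowerToBottom y).raiseToTop x, (hP j).lowerToBottom b]
  all_goals
    rcases lt_trichotomy j i with h | rfl | h
    · simp [h, h.le, extremeProfile, raiseToTop_iff, hx, hy]
    · simp [extremeProfile, raiseToTop_iff, hx, hx.symm, hy, hy.symm, hxy.symm, hi]
    · simp [h.not_gt, h.not_ge, h.ne', extremeProfile, lowerToBottom_iff, hx, hy]

end Profile

section Arrow

variable {V : Type} {n : ℕ}

structure IsArrowRule (F : (Fin n → V → V → Prop) → V → V → Prop) : Prop where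
  isAudience : ∀ P, IsProfile P → IsAudience (F P)
  unanimous : ∀ P, IsProfile P → ∀ v w, (∀ i, P i v w) → F P v w
  iia : ∀ P Q, IsProfile P → IsProfile Q →
    ∀ v w, (∀ i, P i v w ↔ Q i v w) → (F P v w ↔ F Q v w)

/-- Moving voter `i` from ranking `b` last to ranking it first flips society's verdict on `b`
from last to first. -/
def IsPivotal (F : (Fin n → V → V → Prop) → V → V → Prop) (b : V) (i : Fin n) : Prop :=
  RanksLast (F (extremeProfile n b i)) b ∧ RanksFirst (F (extremeProfile n b (i + 1))) b

variable {F : (Fin n → V → V → Prop) → V → V → Prop} {b : V}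

namespace IsArrowRule

theorem ranksFirst_or_ranksLast (hF : IsArrowRule F) {P : Fin n → V → V → Prop}
    (hP : IsProfile P) (hext : ∀ i, RanksFirst (P i) b ∨ RanksLast (P i) b) :
    RanksFirst (F P) b ∨ RanksLast (F P) b := by
  classical
  by_contra! h
  simp only [RanksFirst, RanksLast, not_forall, exists_prop] at h
  obtain ⟨⟨a, hab, hba⟩, ⟨c, hcb, hbc⟩⟩ := h
  have hFP := hF.isAudience P hP
  have hab' : F P a b := (hFP.not_iff hab.symm).mp hba
  have hbc' : F P b c := (hFP.not_iff hcb).mp hbc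
  have hac : a ≠ c := by rintro rfl; exact hFP.asymm hab' hbc'
  -- Lift `c` above `a` in every ballot without moving `b`.
  set Q : Fin n → V → V → Prop := fun i =>
    if RanksFirst (P i) b then raiseToTop b (raiseToTop c WellOrderingRel)
    else lowerToBottom b (raiseToTop c WellOrderingRel) with hQ
  have hQP : IsProfile Q := fun i => by
    simp only [hQ]
    split_ifs
    exacts [(isAudience_wellOrderingRel.raiseToTop c).raiseToTop b,
      (isAudience_wellOrderingRel.raiseToTop c).lowerToBottom b]
  have hca : ∀ i, Q i c a := fun i => by
    simp only [hQ]
    split_ifs <;> simp [raiseToTop_iff, lowerToBottom_iff, hab, hcb, hac]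
  have hab_iff : ∀ i, P i a b ↔ Q i a b := fun i => by
    simp only [hQ]
    split_ifs with h
    · exact iff_of_false ((hP i).asymm (h a hab)) (by simp)
    · exact iff_of_true (((hext i).resolve_left h) a hab) (by simpa using hab)
  have hbc_iff : ∀ i, P i b c ↔ Q i b c := fun i => by
    simp only [hQ]
    split_ifs with h
    · exact iff_of_true (h c hcb) (by simpa using hcb)
    · exact iff_of_false ((hP i).asymm (((hext i).resolve_left h) c hcb)) (by simp)
  have hQab := (hF.iia P Q hP hQP a b hab_iff).mp hab'
  have hQbc := (hF.iia P Q hP hQP b c hbc_iff).mp hbc'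
  exact (hF.isAudience Q hQP).asymm ((hF.isAudience Q hQP).trans hQab hQbc)
    (hF.unanimous Q hQP c a hca)

theorem exists_isPivotal (hF : IsArrowRule F) {a : V} (hab : a ≠ b) : ∃ i, IsPivotal F b i := by
  classical
  have hfirst_n : RanksFirst (F (extremeProfile n b n)) b := fun v hv =>
    hF.unanimous _ (isProfile_extremeProfile b n) b v
      (fun j => ranksFirst_extremeProfile j.isLt v hv)
  have hfirst : ∃ k, RanksFirst (F (extremeProfile n b k)) b := ⟨n, hfirst_n⟩
  have hlast0 : RanksLast (F (extremeProfile n b 0)) b := fun v hv =>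
    hF.unanimous _ (isProfile_extremeProfile b 0) v b
      (fun j => ranksLast_extremeProfile (Nat.zero_le j) v hv)
  obtain ⟨m, hm⟩ : ∃ m, Nat.find hfirst = m + 1 := by
    refine Nat.exists_eq_succ_of_ne_zero fun h0 => ?_
    exact ((hF.isAudience _ (isProfile_extremeProfile b 0)).not_ranksLast_of_ranksFirst hab
      (h0 ▸ Nat.find_spec hfirst)) hlast0
  have hmn : m < n := by
    have := Nat.find_min' hfirst hfirst_n
    omega
  refine ⟨⟨m, hmn⟩, ?_, hm ▸ Nat.find_spec hfirst⟩
  have hext := hF.ranksFirst_or_ranksLast (isProfile_extremeProfile b m) fun j =>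
    (lt_or_ge (j : ℕ) m).imp ranksFirst_extremeProfile ranksLast_extremeProfile
  exact hext.resolve_left (Nat.find_min hfirst (by omega))

theorem dictates_of_isPivotal (hF : IsArrowRule F) {i : Fin n} (hpiv : IsPivotal F b i)
    {x y : V} (hx : x ≠ b) (hy : y ≠ b) {P : Fin n → V → V → Prop} (hP : IsProfile P)
    (hi : P i x y) : F P x y := by
  obtain ⟨Q, hQ, hQP, hxb, hby⟩ := exists_profile_splice hP hx hy hi
  have hQxb : F Q x b := (hF.iia _ _ hQ (isProfile_extremeProfile b i) x b hxb).mpr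
    (hpiv.1 x hx)
  have hQby : F Q b y := (hF.iia _ _ hQ (isProfile_extremeProfile b (i + 1)) b y hby).mpr
    (hpiv.2 y hy)
  exact (hF.iia _ _ hQ hP x y hQP).mp ((hF.isAudience Q hQ).trans hQxb hQby)

theorem eq_of_isPivotal (hF : IsArrowRule F) {a c : V} {i j : Fin n} (hi : IsPivotal F b i)
    (hj : IsPivotal F c j) (hab : a ≠ b) (hac : a ≠ c) (hcb : c ≠ b) : i = j := by
  -- `i` dictates both orders of `a` and `c`, so its ballot alone decides them; but if `i ≠ j`,
  -- the two profiles defining the pivot `j` agree at `i` and disagree on `a` versus `c`.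
  by_contra hij
  have hR := isProfile_extremeProfile (n := n) c j
  have hS := isProfile_extremeProfile (n := n) c (j + 1)
  have hRS : extremeProfile n c (j + 1) i = extremeProfile n c j i :=
    extremeProfile_succ_of_ne (Fin.val_ne_of_ne hij)
  rcases (hR i).total hac with h | h
  · exact (hF.isAudience _ hS).asymm (hF.dictates_of_isPivotal hi hab hcb hS (hRS ▸ h))
      (hj.2 a hac)
  · exact (hF.isAudience _ hR).asymm (hF.dictates_of_isPivotal hi hcb hab hR h) (hj.1 a hac)

theorem exists_dictator (hF : IsArrowRule F) {v₁ v₂ v₃ : V} (h₁₂ : v₁ ≠ v₂) (h₁₃ : v₁ ≠ v₃)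
    (h₂₃ : v₂ ≠ v₃) : ∃ i, ∀ P, IsProfile P → F P = P i := by
  obtain ⟨i, hi⟩ := hF.exists_isPivotal h₁₂.symm
  have hdict : ∀ x y P, IsProfile P → P i x y → F P x y := by
    intro x y P hP hxy
    obtain ⟨c, hcx, hcy⟩ := exists_ne_ne h₁₂ h₁₃ h₂₃ x y
    by_cases hc : c = v₁
    · subst hc
      exact hF.dictates_of_isPivotal hi hcx.symm hcy.symm hP hxy
    obtain ⟨j, hj⟩ := hF.exists_isPivotal hcx.symm
    obtain ⟨a, ha₁, hac⟩ := exists_ne_ne h₁₂ h₁₃ h₂₃ v₁ c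
    rw [hF.eq_of_isPivotal hi hj ha₁ hac hc] at hxy
    exact hF.dictates_of_isPivotal hj hcx.symm hcy.symm hP hxy
  exact ⟨i, fun P hP => (hP i).eq_of_imp (hF.isAudience P hP) fun x y => hdict x y P hP⟩

end IsArrowRule

end Arrow

section Correspondence

variable {V : Type} {n : ℕ}

def CorrespondsTo (F' : ∀ A : Type, (Fin n → A → A → Prop) → A → A → Prop)
    (F : (Fin n → V → V → Prop) → V → V → Prop) : Prop :=
  ∀ (A : Type) (att : A → A → Prop) (val : A → V) (AF : Fin n → A → A → Prop)
    (P : Fin n → V → V → Prop), (∀ i, IsAudience (P i)) →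
    (∀ i, AF i = defeats att val (P i)) → F' A AF = defeats att val (F P)

theorem CorrespondsTo.iia {F' : ∀ A : Type, (Fin n → A → A → Prop) → A → A → Prop}
    {F : (Fin n → V → V → Prop) → V → V → Prop} (hF' : CorrespondsTo F' F)
    (P Q : Fin n → V → V → Prop) (hP : IsProfile P) (hQ : IsProfile Q) (v w : V)
    (hPQ : ∀ i, P i v w ↔ Q i v w) : F P v w ↔ F Q v w := by
  let att : V → V → Prop := fun a b => a = w ∧ b = v
  have hgraph : ∀ R : V → V → Prop, defeats att id R = fun a b => att a b ∧ ¬ R v w := by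
    intro R
    funext a b
    simp only [defeats, att, id]
    grind
  have hsame : ∀ i, defeats att id (P i) = defeats att id (Q i) := fun i => by
    simp only [hgraph, hPQ i]
  have h := congrFun₂ ((hF' V att id _ P hP fun _ => rfl).symm.trans
    (hF' V att id _ Q hQ hsame)) w v
  exact not_iff_not.mp (by simpa [hgraph, att] using h)

end Correspondence

/-- over a set of at least three values, the only unanimous preference
aggregation rule corresponding to some graph aggregation rule is a dictatorship. -/
theorem unanimous_rule_corresponding_to_graph_rule_is_dictatorial
    (V : Type) (v₁ v₂ v₃ : V) (h₁₂ : v₁ ≠ v₂) (h₁₃ : v₁ ≠ v₃) (h₂₃ : v₂ ≠ v₃)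
    (n : ℕ)
    (F : (Fin n → V → V → Prop) → (V → V → Prop))
    (hF : ∀ P : Fin n → V → V → Prop, (∀ i, IsAudience (P i)) → IsAudience (F P))
    (hUnanimous : ∀ P : Fin n → V → V → Prop, (∀ i, IsAudience (P i)) →
      ∀ v w, (∀ i, P i v w) → F P v w)
    (hCorresponds : ∃ F' : ∀ A : Type, (Fin n → A → A → Prop) → (A → A → Prop),
      ∀ (A : Type) (att : A → A → Prop) (val : A → V)
        (AF : Fin n → A → A → Prop) (P : Fin n → V → V → Prop),
        (∀ i, IsAudience (P i)) → (∀ i, AF i = defeats att val (P i)) →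
        F' A AF = defeats att val (F P)) :
    ∃ i : Fin n, ∀ P : Fin n → V → V → Prop, (∀ j, IsAudience (P j)) → F P = P i := by
  obtain ⟨F', hF'⟩ := hCorresponds
  have hArrow : IsArrowRule F := ⟨hF, hUnanimous, CorrespondsTo.iia hF'⟩
  exact hArrow.exists_dictator h₁₂ h₁₃ h₂₃
end

section
/- For every VAF = ⟨A, →, V, val⟩: every defeat graph of the VAF is justified by a unique audience (i.e., for any two audiences P, P', if ⟨A, →_P⟩ = ⟨A, →_{P'}⟩ then P = P') if and only if for every pair of distinct values v_1, v_2 ∈ V there is a pair of arguments a_1, a_2 ∈ A with val(a_1) = v_1, val(a_2) = v_2, and a_1 → a_2 or a_2 → a_1. -/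
/-!
Whenever an argument with value `u` attacks one with value `w`, the defeat graph records whether
the audience prefers `w` to `u`; as audiences are linear orders, this fixes the audience on the
pair `{u, w}`. Conversely, if no
attack connects arguments with values `v₁` and `v₂`, take an audience in which `v₁` and `v₂` are
adjacent; swapping them gives a second audience with the same defeat graph.
-/

open Function

section Audience

variable {V : Type}

lemma IsAudience.of_injective {α : Type*} [LinearOrder α] {f : V → α} (hf : Injective f) :
    IsAudience (fun u w => f u < f w) :=
  ⟨fun _ => lt_irrefl _, fun _ _ _ => lt_trans, fun _ _ hne => lt_or_gt_of_ne (hf.ne hne)⟩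

lemma IsAudience.not_iff_of_ne {P : V → V → Prop} (hP : IsAudience P) {u w : V} (hne : u ≠ w) :
    ¬ P w u ↔ P u w :=
  ⟨fun h => (hP.2.2 u w hne).resolve_right h, fun h h' => hP.1 u (hP.2.1 u w u h h')⟩

theorem exists_audiences_differing_only_at {v₁ v₂ : V} (hne : v₁ ≠ v₂) :
    ∃ P P' : V → V → Prop, IsAudience P ∧ IsAudience P' ∧ P v₁ v₂ ∧ ¬ P' v₁ v₂ ∧
      ∀ u w, ¬ (u = v₁ ∧ w = v₂) → ¬ (u = v₂ ∧ w = v₁) → (P u w ↔ P' u w) := by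
  classical
  let _ : LinearOrder V := IsWellOrder.linearOrder WellOrderingRel
  -- `v₂` is placed right after `v₁` (for `P`) or right before it (for `P'`)
  let g : V → V := fun u => if u = v₂ then v₁ else u
  have hg : ∀ u w, g u = g w → u = w ∨ (u = v₁ ∧ w = v₂) ∨ (u = v₂ ∧ w = v₁) := by
    intro u w h
    simp only [g] at h
    split_ifs at h <;> grind
  let key : V → V → Lex (V × Bool) := fun b u => toLex (g u, decide (u = b))
  have key_lt : ∀ b u w,
      key b u < key b w ↔ g u < g w ∨ g u = g w ∧ decide (u = b) < decide (w = b) := fun _ _ _ => Prod.Lex.toLex_lt_toLex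
  have key_inj : ∀ b, b = v₁ ∨ b = v₂ → Injective (key b) := by
    intro b hb u w h
    simp only [key, toLex_inj, Prod.mk.injEq] at h
    rcases hg u w h.1 with huw | ⟨rfl, rfl⟩ | ⟨rfl, rfl⟩ <;> grind
  refine ⟨fun u w => key v₂ u < key v₂ w, fun u w => key v₁ u < key v₁ w,
    .of_injective (key_inj v₂ (.inr rfl)), .of_injective (key_inj v₁ (.inl rfl)), ?_, ?_, ?_⟩
  · simp [key_lt, g, hne]
  · simp [key_lt, g]
  · intro u w h₁₂ h₂₁
    simp only [key_lt]
    grind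

end Audience

section Defeat

variable {A V : Type} {att : A → A → Prop} {val : A → V} {P P' : V → V → Prop}

theorem defeats_eq_defeats_iff :
    defeats att val P = defeats att val P' ↔
      ∀ a b, att a b → (P (val b) (val a) ↔ P' (val b) (val a)) := by
  simp only [funext_iff, defeats, eq_iff_iff, and_congr_right_iff, not_iff_not]

end Defeat

/-- for every VAF, every defeat graph is justified by a unique audience
iff for every pair of distinct values there is a pair of arguments carrying those
values with an attack between them (in one direction or the other). -/
theorem unique_justifying_audience_iff_attacks_between_all_value_pairs
    (A V : Type) (att : A → A → Prop) (val : A → V) :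
    (∀ P P' : V → V → Prop, IsAudience P → IsAudience P' →
        defeats att val P = defeats att val P' → P = P')
    ↔
    (∀ v₁ v₂ : V, v₁ ≠ v₂ →
        ∃ a₁ a₂ : A, val a₁ = v₁ ∧ val a₂ = v₂ ∧ (att a₁ a₂ ∨ att a₂ a₁)) := by
  constructor
  · intro huniq v₁ v₂ hne
    by_contra! hno
    obtain ⟨P, P', hP, hP', h₁₂, h₁₂', hagree⟩ := exists_audiences_differing_only_at hne
    have hdef : defeats att val P = defeats att val P' :=
      defeats_eq_defeats_iff.2 fun a b hab => hagree _ _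
        (fun ⟨hb, ha⟩ => (hno b a hb ha).2 hab) (fun ⟨hb, ha⟩ => (hno a b ha hb).1 hab)
    exact h₁₂' (huniq P P' hP hP' hdef ▸ h₁₂)
  · intro hatt P P' hP hP' hdef
    rw [defeats_eq_defeats_iff] at hdef
    ext u w
    by_cases huw : u = w
    · subst huw
      exact iff_of_false (hP.1 u) (hP'.1 u)
    obtain ⟨a₁, a₂, rfl, rfl, hatt₁₂ | hatt₂₁⟩ := hatt u w huw
    · rw [← hP.not_iff_of_ne huw, ← hP'.not_iff_of_ne huw, hdef a₁ a₂ hatt₁₂]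
    · exact hdef a₂ a₁ hatt₂₁
end
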